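/- Suppose continuous nonnegative functions $E:(t_{B},t_0]\to[0,\infty)$ satisfy, for constants $K, c, \epsilon > 0$ with $E(t_0)\le \epsilon^4$, the integral inequality $E(t) \le \epsilon^4 + \int_t^{t_0} \big(\epsilon^{1/8} a(s)^{-3} + a(s)^{-1-c\sqrt\epsilon}\big) E(s)\,ds$, where $a$ is positive increasing with $\dot a \ge \kappa a^{-2}$, $\kappa>0$, and $\int_t^{t_0} a(s)^{-3}ds \le \tfrac{K'}{q} a(t)^{-c'q}$ for all $q>0$ and suitable $K',c'>0$. Then there exist constants $C', c''>0$ independent of $\epsilon$ such that $E(t) \le C' \epsilon^4 a(t)^{-c''\epsilon^{1/8}}$ for all $t\in(t_B,t_0]$. -/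

import Mathlib

open Set MeasureTheory intervalIntegral Real


/-- Integral comparison: if `f ≤ h'` on the interior, then `∫_{t₁}^{t0} f ≤ h t0 - h t₁`. -/
lemma myIntegral_le_of_deriv (tB t0 : ℝ) (f h h' : ℝ → ℝ)
    (hf : ContinuousOn f (Set.Ioc tB t0))
    (hh : ContinuousOn h (Set.Ioc tB t0))
    (hd : ∀ x ∈ Set.Ioo tB t0, HasDerivAt h (h' x) x)
    (hle : ∀ x ∈ Set.Ioo tB t0, f x ≤ h' x)
    (t₁ : ℝ) (ht : t₁ ∈ Set.Ioc tB t0) :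
    (∫ s in t₁..t0, f s) ≤ h t0 - h t₁ := by
  rcases eq_or_lt_of_le ht.2 with rfl | hlt
  · simp
  have hsub : Icc t₁ t0 ⊆ Ioc tB t0 := fun x hx => ⟨lt_of_lt_of_le ht.1 hx.1, hx.2⟩
  have hIoosub : Ioo t₁ t0 ⊆ Ioo tB t0 := fun x hx => ⟨lt_trans ht.1 hx.1, hx.2⟩
  have hfc : ContinuousOn f (Icc t₁ t0) := hf.mono hsub
  have hfint : IntegrableOn f (Icc t₁ t0) := hfc.integrableOn_compact isCompact_Icc
  have hfintI : IntegrableOn f (uIcc t₁ t0) := by rwa [uIcc_of_le ht.2]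
  set φ : ℝ → ℝ := fun x => h x - ∫ s in t₁..x, f s with hφ
  have hφc : ContinuousOn φ (Icc t₁ t0) := by
    apply (hh.mono hsub).sub
    have := continuousOn_primitive_interval (a := t₁) (b := t0) (μ := volume) hfintI
    rwa [uIcc_of_le ht.2] at this
  have hφd : ∀ x ∈ Ioo t₁ t0, HasDerivAt φ (h' x - f x) x := by
    intro x hx
    have hx' : x ∈ Ioo tB t0 := hIoosub hx
    have hfi : IntervalIntegrable f volume t₁ x := by
      apply hfintI.intervalIntegrable.mono_set
      rw [uIcc_of_le ht.2, uIcc_of_le hx.1.le]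
      exact Icc_subset_Icc le_rfl hx.2.le
    have hfa : ∀ y ∈ Ioo tB t0, ContinuousAt f y := fun y hy =>
      hf.continuousAt (Ioc_mem_nhds hy.1 hy.2)
    have hmeas := ContinuousAt.stronglyMeasurableAtFilter (μ := volume) isOpen_Ioo hfa x hx'
    have hFTC := intervalIntegral.integral_hasDerivAt_right hfi hmeas (hfa x hx')
    exact (hd x hx').sub hFTC
  have hmono : MonotoneOn φ (Icc t₁ t0) := by
    apply monotoneOn_of_deriv_nonneg (convex_Icc t₁ t0) hφc
    · intro x hx
      rw [interior_Icc] at hx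
      exact (hφd x hx).differentiableAt.differentiableWithinAt
    · intro x hx
      rw [interior_Icc] at hx
      rw [(hφd x hx).deriv]
      have := hle x (hIoosub hx)
      linarith
  have h1 := hmono (left_mem_Icc.2 ht.2) (right_mem_Icc.2 ht.2) ht.2
  simp only [hφ, intervalIntegral.integral_same, sub_zero] at h1
  linarith


/-- Backwards Gronwall inequality. -/
lemma myGronwall (tB t0 : ℝ) (g E : ℝ → ℝ) (e0 : ℝ)
    (hg : ContinuousOn g (Set.Ioc tB t0))
    (hgnn : ∀ s ∈ Set.Ioc tB t0, 0 ≤ g s)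
    (hE : ContinuousOn E (Set.Ioc tB t0))
    (hle : ∀ t ∈ Set.Ioc tB t0, E t ≤ e0 + ∫ s in t..t0, g s * E s) :
    ∀ t ∈ Set.Ioc tB t0, E t ≤ e0 * Real.exp (∫ s in t..t0, g s) := by
  intro t₁ ht
  rcases eq_or_lt_of_le ht.2 with rfl | hlt
  · simpa using hle t₁ ht
  have hsub : Icc t₁ t0 ⊆ Ioc tB t0 := fun x hx => ⟨lt_of_lt_of_le ht.1 hx.1, hx.2⟩
  have hIoosub : Ioo t₁ t0 ⊆ Ioo tB t0 := fun x hx => ⟨lt_trans ht.1 hx.1, hx.2⟩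
  have hgE : ContinuousOn (fun s => g s * E s) (Set.Ioc tB t0) := hg.mul hE
  have hgEint : IntegrableOn (fun s => g s * E s) (uIcc t₁ t0) := by
    rw [uIcc_of_le ht.2]
    exact (hgE.mono hsub).integrableOn_compact isCompact_Icc
  have hgint : IntegrableOn g (uIcc t₁ t0) := by
    rw [uIcc_of_le ht.2]
    exact (hg.mono hsub).integrableOn_compact isCompact_Icc
  set F : ℝ → ℝ := fun x => e0 + ∫ s in x..t0, g s * E s with hF
  set G : ℝ → ℝ := fun x => ∫ s in x..t0, g s with hG
  set H : ℝ → ℝ := fun x => F x * Real.exp (-G x) with hH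
  -- continuity
  have hFc : ContinuousOn F (Icc t₁ t0) := by
    apply continuousOn_const.add
    have := continuousOn_primitive_interval_left (a := t₁) (b := t0) (μ := volume) hgEint
    rwa [uIcc_of_le ht.2] at this
  have hGc : ContinuousOn G (Icc t₁ t0) := by
    have := continuousOn_primitive_interval_left (a := t₁) (b := t0) (μ := volume) hgint
    rwa [uIcc_of_le ht.2] at this
  have hHc : ContinuousOn H (Icc t₁ t0) := hFc.mul (hGc.neg.rexp)
  -- derivatives
  have hca : ∀ y ∈ Ioo tB t0, ContinuousAt (fun s => g s * E s) y := fun y hy =>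
    hgE.continuousAt (Ioc_mem_nhds hy.1 hy.2)
  have hcag : ∀ y ∈ Ioo tB t0, ContinuousAt g y := fun y hy =>
    hg.continuousAt (Ioc_mem_nhds hy.1 hy.2)
  have hHd : ∀ x ∈ Ioo t₁ t0, HasDerivAt H
      ((-(g x * E x)) * Real.exp (-G x) + F x * (Real.exp (-G x) * (g x))) x := by
    intro x hx
    have hx' : x ∈ Ioo tB t0 := hIoosub hx
    have hii : IntervalIntegrable (fun s => g s * E s) volume x t0 := by
      apply hgEint.intervalIntegrable.mono_set
      rw [uIcc_of_le ht.2, uIcc_of_le hx.2.le]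
      exact Icc_subset_Icc hx.1.le le_rfl
    have hiig : IntervalIntegrable g volume x t0 := by
      apply hgint.intervalIntegrable.mono_set
      rw [uIcc_of_le ht.2, uIcc_of_le hx.2.le]
      exact Icc_subset_Icc hx.1.le le_rfl
    have hmeas := ContinuousAt.stronglyMeasurableAtFilter (μ := volume) isOpen_Ioo hca x hx'
    have hmeasg := ContinuousAt.stronglyMeasurableAtFilter (μ := volume) isOpen_Ioo hcag x hx'
    have hFd : HasDerivAt F (-(g x * E x)) x := by
      apply HasDerivAt.const_add
      exact intervalIntegral.integral_hasDerivAt_left hii hmeas (hca x hx')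
    have hGd : HasDerivAt G (-(g x)) x :=
      intervalIntegral.integral_hasDerivAt_left hiig hmeasg (hcag x hx')
    have hexpd : HasDerivAt (fun y => Real.exp (-G y)) (Real.exp (-G x) * (g x)) x := by
      have := (hGd.neg).exp
      simpa using this
    exact hFd.mul hexpd
  -- monotone
  have hmono : MonotoneOn H (Icc t₁ t0) := by
    apply monotoneOn_of_deriv_nonneg (convex_Icc t₁ t0) hHc
    · intro x hx
      rw [interior_Icc] at hx
      exact (hHd x hx).differentiableAt.differentiableWithinAt
    · intro x hx
      rw [interior_Icc] at hx
      rw [(hHd x hx).deriv]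
      have hx' : x ∈ Ioc tB t0 := ⟨(hIoosub hx).1, hx.2.le⟩
      have hEF : E x ≤ F x := hle x hx'
      have hgx : 0 ≤ g x := hgnn x hx'
      have hex : 0 < Real.exp (-G x) := Real.exp_pos _
      nlinarith [mul_nonneg hgx (sub_nonneg.2 hEF)]
  have h1 := hmono (left_mem_Icc.2 ht.2) (right_mem_Icc.2 ht.2) ht.2
  have hHt0 : H t0 = e0 := by simp [hH, hF, hG]
  have hEt1 : E t₁ ≤ F t₁ := hle t₁ ht
  rw [hHt0] at h1
  -- H t₁ = F t₁ * exp (-G t₁) ≤ e0, so F t₁ ≤ e0 * exp (G t₁)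
  have hex : 0 < Real.exp (-G t₁) := Real.exp_pos _
  have : F t₁ ≤ e0 * Real.exp (G t₁) := by
    have h2 : F t₁ * Real.exp (-G t₁) ≤ e0 := h1
    have h3 : F t₁ * Real.exp (-G t₁) * Real.exp (G t₁) ≤ e0 * Real.exp (G t₁) :=
      mul_le_mul_of_nonneg_right h2 (Real.exp_pos _).le
    rwa [mul_assoc, ← Real.exp_add, neg_add_cancel, Real.exp_zero, mul_one] at h3
  exact hEt1.trans this

set_option maxHeartbeats 1000000 in
/-- The core Gronwall mechanism for improving energy bootstrap bounds toward the
Big Bang: if a nonnegative continuous energy `E` on `(t_B, t₀]` satisfies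
`E(t) ≤ ε⁴ + ∫ₜ^{t₀} (ε^{1/8} a⁻³ + a^{-1-c√ε}) E`, where the scale factor `a`
is positive, increasing, with `ȧ ≥ κ a⁻²` and
`∫ₜ^{t₀} a⁻³ ≤ (K'/q) a(t)^{-c'q}` for all `q > 0`, then (for sufficiently
small `ε`) there are constants `C'', c'' > 0` independent of `ε` with
`E(t) ≤ C'' ε⁴ a(t)^{-c'' ε^{1/8}}`. -/
theorem bootstrap_gronwall_improvement
    (tB t0 : ℝ) (htB : tB < t0)
    (a : ℝ → ℝ) (κ K' c c' : ℝ)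
    (hκ : 0 < κ) (hK' : 0 < K') (hc : 0 < c) (hc' : 0 < c')
    (hapos : ∀ t ∈ Set.Ioc tB t0, 0 < a t)
    (hacont : ContinuousOn a (Set.Ioc tB t0))
    (hamono : MonotoneOn a (Set.Ioc tB t0))
    (hadiff : ∀ t ∈ Set.Ioo tB t0, DifferentiableAt ℝ a t)
    (hader : ∀ t ∈ Set.Ioo tB t0, κ * (a t) ^ (-2 : ℤ) ≤ deriv a t)
    (hint : ∀ q > (0 : ℝ), ∀ t ∈ Set.Ioc tB t0,
        (∫ s in t..t0, (a s) ^ (-3 : ℤ)) ≤ K' / q * (a t) ^ (-(c' * q))) :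
    ∃ ε0 C'' c'' : ℝ, 0 < ε0 ∧ 0 < C'' ∧ 0 < c'' ∧
      ∀ ε : ℝ, 0 < ε → ε ≤ ε0 →
      ∀ E : ℝ → ℝ, ContinuousOn E (Set.Ioc tB t0) →
        (∀ t ∈ Set.Ioc tB t0, 0 ≤ E t) →
        E t0 ≤ ε ^ 4 →
        (∀ t ∈ Set.Ioc tB t0,
          E t ≤ ε ^ 4 + ∫ s in t..t0,
            (ε ^ ((1 : ℝ) / 8) * (a s) ^ (-3 : ℤ)
              + (a s) ^ (-(1 + c * Real.sqrt ε))) * E s) →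
        ∀ t ∈ Set.Ioc tB t0,
          E t ≤ C'' * ε ^ 4 * (a t) ^ (-(c'' * ε ^ ((1 : ℝ) / 8))) := by
  have ht0 : t0 ∈ Set.Ioc tB t0 := ⟨htB, le_rfl⟩
  have hApos : 0 < a t0 := hapos t0 ht0
  set A := a t0 with hA
  set M : ℝ := max 1 A with hM
  have hM1 : (1:ℝ) ≤ M := le_max_left _ _
  have hAM : A ≤ M := le_max_right _ _
  have hMpos : (0:ℝ) < M := lt_of_lt_of_le one_pos hM1
  refine ⟨min 1 (1/c^2), Real.exp ((M + M^2)/κ), 1/κ, by positivity, Real.exp_pos _,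
    by positivity, ?_⟩
  intro ε hε hεle E hEc hEnn hE0 hInt t₁ ht₁
  have hane : ∀ s ∈ Set.Ioc tB t0, a s ≠ 0 := fun s hs => (hapos s hs).ne'
  -- ε facts
  have hε1 : ε ≤ 1 := le_trans hεle (min_le_left _ _)
  have hsε : 0 ≤ Real.sqrt ε := Real.sqrt_nonneg _
  have hεc : c * Real.sqrt ε ≤ 1 := by
    have h2 : ε ≤ 1/c^2 := le_trans hεle (min_le_right _ _)
    have h3 : Real.sqrt ε ≤ Real.sqrt (1/c^2) := Real.sqrt_le_sqrt h2
    have h4 : Real.sqrt (1/c^2) = 1/c := by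
      rw [show (1/c^2) = (1/c)^2 by ring, Real.sqrt_sq (by positivity)]
    rw [h4] at h3
    calc c * Real.sqrt ε ≤ c * (1/c) := mul_le_mul_of_nonneg_left h3 hc.le
      _ = 1 := by field_simp
  set p := ε ^ ((1:ℝ)/8) with hp
  have hppos : 0 < p := Real.rpow_pos_of_pos hε _
  have hp1 : p ≤ 1 := Real.rpow_le_one hε.le hε1 (by norm_num)
  set β : ℝ := 2 - c * Real.sqrt ε with hβ
  have hβ1 : 1 ≤ β := by simp only [hβ]; linarith
  have hβ2 : β ≤ 2 := by simp only [hβ]; nlinarith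
  -- the Gronwall factor
  set g : ℝ → ℝ := fun s => p * (a s)^(-3:ℤ) + (a s)^(-(1 + c * Real.sqrt ε)) with hg
  have hgc : ContinuousOn g (Set.Ioc tB t0) := by
    apply ContinuousOn.add
    · exact continuousOn_const.mul (hacont.zpow₀ _ (fun s hs => Or.inl (hane s hs)))
    · exact hacont.rpow_const (fun s hs => Or.inl (hane s hs))
  have hgnn : ∀ s ∈ Set.Ioc tB t0, 0 ≤ g s := by
    intro s hs
    have h1 : 0 < (a s)^(-3:ℤ) := zpow_pos (hapos s hs) _
    have h2 : 0 < (a s)^(-(1 + c * Real.sqrt ε)) := Real.rpow_pos_of_pos (hapos s hs) _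
    positivity
  have hgron := myGronwall tB t0 g E (ε^4) hgc hgnn hEc hInt t₁ ht₁
  -- bound the integral of g
  have hIccsub : Set.Icc t₁ t0 ⊆ Set.Ioc tB t0 := fun x hx => ⟨lt_of_lt_of_le ht₁.1 hx.1, hx.2⟩
  have hii3 : IntervalIntegrable (fun s => (a s)^(-3:ℤ)) volume t₁ t0 := by
    apply ContinuousOn.intervalIntegrable
    rw [uIcc_of_le ht₁.2]
    exact (hacont.zpow₀ _ (fun s hs => Or.inl (hane s hs))).mono hIccsub
  have hiir : IntervalIntegrable (fun s => (a s)^(-(1 + c * Real.sqrt ε))) volume t₁ t0 := by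
    apply ContinuousOn.intervalIntegrable
    rw [uIcc_of_le ht₁.2]
    exact (hacont.rpow_const (fun s hs => Or.inl (hane s hs))).mono hIccsub
  have hsplit : (∫ s in t₁..t0, g s)
      = p * (∫ s in t₁..t0, (a s)^(-3:ℤ)) + ∫ s in t₁..t0, (a s)^(-(1 + c * Real.sqrt ε)) := by
    rw [← intervalIntegral.integral_const_mul]
    exact intervalIntegral.integral_add (hii3.const_mul p) hiir
  -- first integral bound via log
  have hb1 : (∫ s in t₁..t0, (a s)^(-3:ℤ)) ≤ Real.log A / κ - Real.log (a t₁) / κ := by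
    apply myIntegral_le_of_deriv tB t0 _ (fun x => Real.log (a x) / κ)
      (fun x => deriv a x / a x / κ) _ _ _ _ t₁ ht₁
    · exact (hacont.zpow₀ _ (fun s hs => Or.inl (hane s hs)))
    · exact (hacont.log (fun s hs => hane s hs)).div_const κ
    · intro x hx
      have hx' : x ∈ Set.Ioc tB t0 := Set.Ioo_subset_Ioc_self hx
      exact (((hadiff x hx).hasDerivAt).log (hane x hx')).div_const κ
    · intro x hx
      have hx' : x ∈ Set.Ioc tB t0 := Set.Ioo_subset_Ioc_self hx
      have hax : 0 < a x := hapos x hx'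
      have h1 := hader x hx
      show (a x) ^ (-3:ℤ) ≤ deriv a x / a x / κ
      rw [div_div, le_div_iff₀ (by positivity)]
      have key : (a x)^(-3:ℤ) * (a x * κ) = κ * (a x)^(-2:ℤ) := by
        have e : (a x)^(-3:ℤ) * (a x) = (a x)^(-2:ℤ) := by
          calc (a x)^(-3:ℤ) * (a x) = (a x)^(-3:ℤ) * (a x)^(1:ℤ) := by norm_num
            _ = (a x)^(-3 + 1:ℤ) := (zpow_add₀ hax.ne' _ _).symm
            _ = (a x)^(-2:ℤ) := by norm_num
        rw [← mul_assoc, e]; ring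
      rw [key]; exact h1
  -- second integral bound
  have hb2 : (∫ s in t₁..t0, (a s)^(-(1 + c * Real.sqrt ε))) ≤ M^2 / κ := by
    have := myIntegral_le_of_deriv tB t0 _ (fun x => (a x)^β / κ)
      (fun x => deriv a x * β * (a x)^(β - 1) / κ)
      (hacont.rpow_const (p := -(1 + c * Real.sqrt ε)) (fun s hs => Or.inl (hane s hs)))
      ((hacont.rpow_const (p := β) (fun s hs => Or.inl (hane s hs))).div_const κ)
      ?_ ?_ t₁ ht₁
    · refine le_trans this ?_
      have h1 : 0 ≤ (a t₁)^β / κ := by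
        have := Real.rpow_nonneg (hapos t₁ ht₁).le β
        positivity
      have h2 : A^β ≤ M^2 := by
        calc A^β ≤ M^β := Real.rpow_le_rpow hApos.le hAM (by linarith)
          _ ≤ M^(2:ℝ) := Real.rpow_le_rpow_of_exponent_le hM1 hβ2
          _ = M^2 := by rw [show (2:ℝ) = ((2:ℕ):ℝ) by norm_num, Real.rpow_natCast]
      have h3 : A^β / κ ≤ M^2 / κ := by gcongr
      show A^β / κ - (a t₁)^β / κ ≤ M^2 / κ
      linarith
    · intro x hx
      have hx' : x ∈ Set.Ioc tB t0 := Set.Ioo_subset_Ioc_self hx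
      exact (((hadiff x hx).hasDerivAt).rpow_const (Or.inl (hane x hx'))).div_const κ
    · intro x hx
      have hx' : x ∈ Set.Ioc tB t0 := Set.Ioo_subset_Ioc_self hx
      have hax : 0 < a x := hapos x hx'
      have h1 := hader x hx
      have e1 : (a x)^(-2:ℤ) = (a x)^(-2:ℝ) := by
        rw [← Real.rpow_intCast]; norm_num
      have e2 : (a x)^(-2:ℝ) * (a x)^(β-1) = (a x)^(-(1 + c * Real.sqrt ε)) := by
        rw [← Real.rpow_add hax]
        congr 1
        simp only [hβ]; ring
      have hrnn : 0 ≤ (a x)^(β-1) := Real.rpow_nonneg hax.le _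
      show (a x) ^ (-(1 + c * Real.sqrt ε)) ≤ deriv a x * β * (a x)^(β-1) / κ
      rw [div_eq_mul_inv]
      have h2 : κ * (a x)^(-2:ℝ) ≤ deriv a x := by rwa [e1] at h1
      have hd0 : 0 ≤ deriv a x := le_trans (by positivity) h2
      have h3 := mul_le_mul_of_nonneg_right h2 hrnn
      have hκi : (0:ℝ) ≤ κ⁻¹ := by positivity
      have h4 := mul_le_mul_of_nonneg_right h3 hκi
      have h5 : deriv a x * (a x)^(β-1) * κ⁻¹ ≤ deriv a x * β * (a x)^(β-1) * κ⁻¹ := by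
        nlinarith [mul_nonneg (mul_nonneg hd0 hrnn) hκi]
      calc (a x)^(-(1 + c * Real.sqrt ε)) = (a x)^(-2:ℝ) * (a x)^(β-1) := e2.symm
        _ = κ * (a x)^(-2:ℝ) * (a x)^(β-1) * κ⁻¹ := by field_simp
        _ ≤ deriv a x * (a x)^(β-1) * κ⁻¹ := h4
        _ ≤ deriv a x * β * (a x)^(β-1) * κ⁻¹ := h5
  -- combine
  have hI : (∫ s in t₁..t0, g s) ≤ p * (Real.log A / κ - Real.log (a t₁) / κ) + M^2/κ := by
    rw [hsplit]
    have := mul_le_mul_of_nonneg_left hb1 hppos.le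
    linarith
  have hat₁ : 0 < a t₁ := hapos t₁ ht₁
  have hexp : Real.exp (∫ s in t₁..t0, g s)
      ≤ Real.exp ((M + M^2)/κ) * (a t₁) ^ (-(1/κ * p)) := by
    rw [Real.rpow_def_of_pos hat₁, ← Real.exp_add]
    apply Real.exp_le_exp.2
    have hpl : p * Real.log A ≤ M := by
      have hlog : Real.log A ≤ A - 1 := Real.log_le_sub_one_of_pos hApos
      rcases le_or_gt (Real.log A) 0 with h | h
      · nlinarith
      · nlinarith [mul_nonneg (sub_nonneg.2 hp1) h.le]
    have hκi : (0:ℝ) ≤ κ⁻¹ := by positivity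
    have h2 := mul_le_mul_of_nonneg_right hpl hκi
    simp only [div_eq_mul_inv] at hI ⊢
    linarith [hI, h2]
  calc E t₁ ≤ ε^4 * Real.exp (∫ s in t₁..t0, g s) := hgron
    _ ≤ ε^4 * (Real.exp ((M + M^2)/κ) * (a t₁) ^ (-(1/κ * p))) :=
        mul_le_mul_of_nonneg_left hexp (by positivity)
    _ = Real.exp ((M + M^2)/κ) * ε^4 * (a t₁) ^ (-(1/κ * p)) := by ring
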